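/- arXiv:math/0608685 — 6 statements merged into one kernel-verified Lean document; each statement's English description precedes it below -/
import Mathlib

section
/- Let (X,d) be a geodesic metric space and δ ≥ 0 such that every geodesic triangle in X is δ-thin in the tripod sense: for any geodesic triangle with vertices a, b, c, if p lies on a side [a,b] and q lies on a side [a,c] with d(a,p) = d(a,q) ≤ (b|c)_a, then d(p,q) ≤ δ. Let g be an isometry of X, let N > 0 be such that the set Y = {y ∈ X : d(y, g(y)) ≤ N} is nonempty, let x ∈ X, let M > 0, and let y ∈ Y satisfy d(x,y) ≤ d(x,Y) + M, where d(x,Y) = inf{d(x,y') : y' ∈ Y}. Then the Gromov product (x | g(y))_y is at most δ + M. -/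
/-- `γ : ℝ → X` (restricted to `[0, dist a b]`) is a geodesic from `a` to `b`,
parametrized by arclength. -/
def IsGeodesicFrom {X : Type*} [MetricSpace X] (γ : ℝ → X) (a b : X) : Prop :=
  γ 0 = a ∧ γ (dist a b) = b ∧
    ∀ s ∈ Set.Icc (0 : ℝ) (dist a b), ∀ t ∈ Set.Icc (0 : ℝ) (dist a b),
      dist (γ s) (γ t) = |s - t|

/-- The Gromov product `(a|b)_c`. -/
noncomputable def gromovProd {X : Type*} [MetricSpace X] (a b c : X) : ℝ :=
  (dist a c + dist b c - dist a b) / 2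

/-- In a geodesic metric space whose geodesic triangles are `δ`-thin in the tripod
sense, if `g` is an isometry, `Y = {y : d(y, g y) ≤ N}` is nonempty, and `y ∈ Y`
satisfies `d(x,y) ≤ d(x,Y) + M`, then the Gromov product `(x | g y)_y` is at most
`δ + M`. -/
theorem gromovProd_le_of_almost_minimal {X : Type*} [MetricSpace X] (δ : ℝ) (hδ : 0 ≤ δ)
    (hgeo : ∀ a b : X, ∃ γ : ℝ → X, IsGeodesicFrom γ a b)
    (hthin : ∀ a b c : X, ∀ γ₁ γ₂ : ℝ → X, IsGeodesicFrom γ₁ a b → IsGeodesicFrom γ₂ a c →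
      ∀ s : ℝ, 0 ≤ s → s ≤ gromovProd b c a → dist (γ₁ s) (γ₂ s) ≤ δ)
    (g : X → X) (hg : Isometry g) (hbij : Function.Bijective g)
    (N : ℝ) (hN : 0 < N) (Y : Set X) (hY : Y = {y : X | dist y (g y) ≤ N})
    (hYne : Y.Nonempty)
    (x : X) (M : ℝ) (hM : 0 < M)
    (y : X) (hy : y ∈ Y) (hxy : dist x y ≤ Metric.infDist x Y + M) :
    gromovProd x (g y) y ≤ δ + M := by
  obtain ⟨γ₁, hγ₁⟩ := hgeo y x
  obtain ⟨γ₂, hγ₂⟩ := hgeo y (g y)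
  set t : ℝ := gromovProd x (g y) y with ht
  -- basic triangle inequalities
  have tri1 := dist_triangle x y (g y)
  have tri2 := dist_triangle x (g y) y
  have tri3 := dist_triangle y x (g y)
  have hc1 : dist y x = dist x y := dist_comm y x
  have hc2 : dist (g y) y = dist y (g y) := dist_comm (g y) y
  have hc3 : dist (g y) x = dist x (g y) := dist_comm (g y) x
  have ht0 : 0 ≤ t := by simp only [ht, gromovProd]; linarith
  have htxy : t ≤ dist y x := by simp only [ht, gromovProd]; linarith
  have htL : t ≤ dist y (g y) := by simp only [ht, gromovProd]; linarith
  -- thinness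
  have hthin' : dist (γ₁ t) (γ₂ t) ≤ δ :=
    hthin y x (g y) γ₁ γ₂ hγ₁ hγ₂ t ht0 le_rfl
  obtain ⟨h10, h11, h12⟩ := hγ₁
  obtain ⟨h20, h21, h22⟩ := hγ₂
  -- distance from x to γ₁ t
  have hd1 : dist x (γ₁ t) = dist y x - t := by
    have := h12 (dist y x) ⟨dist_nonneg, le_rfl⟩ t ⟨ht0, htxy⟩
    rw [h11] at this
    rw [this, abs_of_nonneg (by linarith)]
  -- distances for m := γ₂ t
  have hd2 : dist (γ₂ t) (g y) = dist y (g y) - t := by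
    have := h22 t ⟨ht0, htL⟩ (dist y (g y)) ⟨dist_nonneg, le_rfl⟩
    rw [h21] at this
    rw [this, abs_of_nonpos (by linarith), neg_sub]
  have hd3 : dist y (γ₂ t) = t := by
    have := h22 0 ⟨le_rfl, dist_nonneg⟩ t ⟨ht0, htL⟩
    rw [h20] at this
    rw [this, abs_of_nonpos (by linarith), neg_sub, sub_zero]
  -- y ∈ Y gives dist y (g y) ≤ N
  have hyN : dist y (g y) ≤ N := by rw [hY] at hy; exact hy
  -- m := γ₂ t is in Y
  have hmY : γ₂ t ∈ Y := by
    rw [hY]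
    have : dist (γ₂ t) (g (γ₂ t)) ≤ dist (γ₂ t) (g y) + dist (g y) (g (γ₂ t)) :=
      dist_triangle _ _ _
    have hiso : dist (g y) (g (γ₂ t)) = dist y (γ₂ t) := hg.dist_eq y (γ₂ t)
    show dist (γ₂ t) (g (γ₂ t)) ≤ N
    rw [hiso, hd3, hd2] at this
    linarith
  have hinf : Metric.infDist x Y ≤ dist x (γ₂ t) := Metric.infDist_le_dist_of_mem hmY
  have hdm : dist x (γ₂ t) ≤ dist y x - t + δ := by
    have := dist_triangle x (γ₁ t) (γ₂ t)
    linarith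
  linarith
end

section
/- Let (X,d) be a geodesic metric space and δ ≥ 0 such that (i) every geodesic triangle in X is δ-thin in the tripod sense: for any geodesic triangle with vertices a, b, c, if p lies on a side [a,b] and q lies on a side [a,c] with d(a,p) = d(a,q) ≤ (b|c)_a, then d(p,q) ≤ δ; and (ii) the four-point inequality d(a,c) + d(b,d) ≤ max{d(a,b) + d(c,d), d(a,d) + d(b,c)} + 2δ holds for all a, b, c, d ∈ X. Let g be an isometry of X and let N > 0 be a real number such that the set Y = {y ∈ X : d(y, g(y)) ≤ N} is nonempty. Given a point x ∈ X and a number M > 0, choose y ∈ Y with d(x,y) ≤ d(x,Y) + M, where d(x,Y) = inf{d(x,y') : y' ∈ Y}. Then either d(x, g(x)) ≥ 2·d(x,y) + d(y, g(y)) − 2(3δ + 2M), or d(y, g(y)) ≤ 3δ + 2M. -/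
lemma IsGeodesicFrom.map_isometry {X : Type*} [MetricSpace X] {g : X → X}
    (hg : Isometry g) {γ : ℝ → X} {a b : X} (h : IsGeodesicFrom γ a b) :
    IsGeodesicFrom (fun s => g (γ s)) (g a) (g b) := by
  obtain ⟨h0, h1, hd⟩ := h
  refine ⟨by simp [h0], by simp [hg.dist_eq, h1], ?_⟩
  intro s hs t ht
  rw [hg.dist_eq] at hs ht
  simpa [hg.dist_eq] using hd s hs t ht

lemma IsGeodesicFrom.reverse {X : Type*} [MetricSpace X] {γ : ℝ → X} {a b : X}
    (h : IsGeodesicFrom γ a b) :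
    IsGeodesicFrom (fun s => γ (dist a b - s)) b a := by
  obtain ⟨h0, h1, hd⟩ := h
  refine ⟨by simpa using h1, ?_, ?_⟩
  · show γ (dist a b - dist b a) = a
    rw [dist_comm b a, sub_self]; exact h0
  · intro s hs t ht
    rw [dist_comm b a, Set.mem_Icc] at hs ht
    have e := hd (dist a b - s)
      (Set.mem_Icc.mpr ⟨by linarith [hs.2], by linarith [hs.1]⟩)
      (dist a b - t)
      (Set.mem_Icc.mpr ⟨by linarith [ht.2], by linarith [ht.1]⟩)
    show dist (γ (dist a b - s)) (γ (dist a b - t)) = |s - t|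
    rw [e, show dist a b - s - (dist a b - t) = t - s from by ring, abs_sub_comm]

/-- Combined reversal and isometric image of a geodesic. -/
lemma IsGeodesicFrom.rev_map {X : Type*} [MetricSpace X] {g : X → X}
    (hg : Isometry g) {γ : ℝ → X} {a b : X} (h : IsGeodesicFrom γ a b) :
    IsGeodesicFrom (fun s => g (γ (dist a b - s))) (g b) (g a) :=
  h.reverse.map_isometry hg

/-- Key auxiliary lemma: since every point on a geodesic `[y, g y]` is moved by `g`
at most `d(y, g y) ≤ N`, every such point lies in `Y`; combined with thin triangles
and near-minimality of `y` this forces `(x | g y)_y ≤ δ + M`. -/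
lemma gromov_le_of_min {X : Type*} [MetricSpace X] (δ M N : ℝ)
    (hthin : ∀ a b c : X, ∀ γ₁ γ₂ : ℝ → X, IsGeodesicFrom γ₁ a b → IsGeodesicFrom γ₂ a c →
      ∀ s : ℝ, 0 ≤ s → s ≤ gromovProd b c a → dist (γ₁ s) (γ₂ s) ≤ δ)
    (hgeo : ∀ a b : X, ∃ γ : ℝ → X, IsGeodesicFrom γ a b)
    (g : X → X) (hg : Isometry g)
    (Y : Set X) (hmem : ∀ z : X, dist z (g z) ≤ N → z ∈ Y)
    (x y : X)
    (hyg : dist y (g y) ≤ N)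
    (hxy : dist x y ≤ Metric.infDist x Y + M) :
    gromovProd x (g y) y ≤ δ + M := by
  obtain ⟨γ, hγ⟩ := hgeo y x
  obtain ⟨σ, hσ⟩ := hgeo y (g y)
  set α := gromovProd x (g y) y with hαdef
  have hc1 : dist y x = dist x y := dist_comm y x
  have hc2 : dist (g y) y = dist y (g y) := dist_comm _ _
  have ht1 : dist x (g y) ≤ dist x y + dist y (g y) := dist_triangle _ _ _
  have ht2 : dist y (g y) ≤ dist y x + dist x (g y) := dist_triangle _ _ _
  have ht3 : dist x y ≤ dist x (g y) + dist (g y) y := dist_triangle _ _ _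
  have hα : α = (dist x y + dist (g y) y - dist x (g y)) / 2 := hαdef.trans rfl
  have hα0 : 0 ≤ α := by rw [hα]; linarith
  have hαD : α ≤ dist x y := by rw [hα]; linarith
  have hαL : α ≤ dist y (g y) := by rw [hα]; linarith
  have hth := hthin y x (g y) γ σ hγ hσ α hα0 (le_of_eq hαdef)
  -- distance from x to γ α
  have hγ1 := hγ.2.2 α (Set.mem_Icc.mpr ⟨hα0, by rw [hc1]; exact hαD⟩)
    (dist y x) (Set.mem_Icc.mpr ⟨dist_nonneg, le_rfl⟩)
  rw [hγ.2.1] at hγ1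
  have hγ2 : dist (γ α) x = dist x y - α := by
    rw [hγ1, abs_of_nonpos (show α - dist y x ≤ 0 from by rw [hc1]; linarith), hc1]; ring
  -- σ α lies in Y
  have hs1 := hσ.2.2 α (Set.mem_Icc.mpr ⟨hα0, hαL⟩)
    (dist y (g y)) (Set.mem_Icc.mpr ⟨dist_nonneg, le_rfl⟩)
  rw [hσ.2.1] at hs1
  have hs1' : dist (σ α) (g y) = dist y (g y) - α := by
    rw [hs1, abs_of_nonpos (show α - dist y (g y) ≤ 0 from by linarith)]; ring
  have hs2 := hσ.2.2 0 (Set.mem_Icc.mpr ⟨le_rfl, dist_nonneg⟩)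
    α (Set.mem_Icc.mpr ⟨hα0, hαL⟩)
  rw [hσ.1] at hs2
  have hs2' : dist y (σ α) = α := by
    rw [hs2, zero_sub, abs_neg, abs_of_nonneg hα0]
  have hgσ : dist (g y) (g (σ α)) = α := by rw [hg.dist_eq]; exact hs2'
  have hσY : σ α ∈ Y := by
    apply hmem
    calc dist (σ α) (g (σ α)) ≤ dist (σ α) (g y) + dist (g y) (g (σ α)) := dist_triangle _ _ _
      _ = dist y (g y) := by rw [hs1', hgσ]; ring
      _ ≤ N := hyg
  have hinf := Metric.infDist_le_dist_of_mem (x := x) hσY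
  have hxσ : dist x (σ α) ≤ dist x y - α + δ := by
    have h1 : dist x (σ α) ≤ dist x (γ α) + dist (γ α) (σ α) := dist_triangle _ _ _
    have h2 : dist x (γ α) = dist x y - α := by rw [dist_comm]; exact hγ2
    linarith
  linarith

/-- Lemma 2.1: in a geodesic metric space with `δ`-thin triangles (tripod sense)
satisfying the four-point inequality, if `g` is an isometry, the set
`Y = {y : d(y, g y) ≤ N}` is nonempty, and `y ∈ Y` satisfies `d(x,y) ≤ d(x,Y) + M`,
then either `d(x, g x) ≥ 2 d(x,y) + d(y, g y) - 2(3δ + 2M)`, or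
`d(y, g y) ≤ 3δ + 2M`. -/
theorem dist_orbit_ineq_or_small_displacement {X : Type*} [MetricSpace X]
    (δ : ℝ) (hδ : 0 ≤ δ)
    (hgeo : ∀ a b : X, ∃ γ : ℝ → X, IsGeodesicFrom γ a b)
    (hthin : ∀ a b c : X, ∀ γ₁ γ₂ : ℝ → X, IsGeodesicFrom γ₁ a b → IsGeodesicFrom γ₂ a c →
      ∀ s : ℝ, 0 ≤ s → s ≤ gromovProd b c a → dist (γ₁ s) (γ₂ s) ≤ δ)
    (hfour : ∀ a b c e : X,
      dist a c + dist b e ≤ max (dist a b + dist c e) (dist a e + dist b c) + 2 * δ)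
    (g : X → X) (hg : Isometry g) (hbij : Function.Bijective g)
    (N : ℝ) (hN : 0 < N) (Y : Set X) (hY : Y = {y : X | dist y (g y) ≤ N})
    (hYne : Y.Nonempty)
    (x : X) (M : ℝ) (hM : 0 < M)
    (y : X) (hy : y ∈ Y) (hxy : dist x y ≤ Metric.infDist x Y + M) :
    dist x (g x) ≥ 2 * dist x y + dist y (g y) - 2 * (3 * δ + 2 * M) ∨
      dist y (g y) ≤ 3 * δ + 2 * M := by
  rcases le_or_gt (dist y (g y)) (3 * δ + 2 * M) with hsmall | hLK
  · exact Or.inr hsmall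
  left
  by_contra hcon
  push_neg at hcon
  have hyN : dist y (g y) ≤ N := by rw [hY] at hy; exact hy
  have hmemg : ∀ z : X, dist z (g z) ≤ N → z ∈ Y := fun z hz => by rw [hY]; exact hz
  have hα := gromov_le_of_min δ M N hthin hgeo g hg Y hmemg x y hyN hxy
  -- the inverse isometry
  have hsurj : Function.Surjective g := hbij.2
  set gi : X → X := Function.surjInv hsurj with hgidef
  have hggi : ∀ a, g (gi a) = a := fun a => Function.surjInv_eq hsurj a
  have hgi : Isometry gi := Isometry.of_dist_eq (fun a b => by
    conv_rhs => rw [← hggi a, ← hggi b]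
    exact (hg.dist_eq _ _).symm)
  have hmemgi : ∀ z : X, dist z (gi z) ≤ N → z ∈ Y := by
    intro z hz
    apply hmemg
    have e : dist z (g z) = dist z (gi z) := by
      rw [← hg.dist_eq z (gi z), hggi z]
      exact dist_comm z (g z)
    rw [e]; exact hz
  have hygiN : dist y (gi y) ≤ N := by
    have e : dist y (gi y) = dist y (g y) := by
      rw [← hg.dist_eq y (gi y), hggi y]
      exact dist_comm (g y) y
    rw [e]; exact hyN
  have hβ0 := gromov_le_of_min δ M N hthin hgeo gi hgi Y hmemgi x y hygiN hxy
  have egy1 : dist (gi y) y = dist y (g y) := by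
    rw [← hg.dist_eq (gi y) y, hggi y]
  have egy2 : dist x (gi y) = dist (g x) y := by
    rw [← hg.dist_eq x (gi y), hggi y]
  have hβ : (dist x y + dist y (g y) - dist (g x) y) / 2 ≤ δ + M := by
    have e : gromovProd x (gi y) y = (dist x y + dist (gi y) y - dist x (gi y)) / 2 := rfl
    rw [e, egy1, egy2] at hβ0
    exact hβ0
  have hαlin : (dist x y + dist (g y) y - dist x (g y)) / 2 ≤ δ + M := by
    have e : gromovProd x (g y) y = (dist x y + dist (g y) y - dist x (g y)) / 2 := rfl
    rw [e] at hα; exact hα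
  have hc1 : dist y x = dist x y := dist_comm _ _
  have hc2 : dist (g y) y = dist y (g y) := dist_comm _ _
  have hc3 : dist y (g x) = dist (g x) y := dist_comm _ _
  have hc4 : dist (g x) (g y) = dist x y := hg.dist_eq _ _
  have hc5 : dist (g y) (g x) = dist x y := by rw [dist_comm]; exact hc4
  -- d(x,y) is large
  have htri4 : dist y (g y) ≤ dist y x + dist x (g x) + dist (g x) (g y) :=
    dist_triangle4 _ _ _ _
  have hD : 3 * δ + 2 * M < 2 * dist x y := by
    rw [hc1, hc4] at htri4; linarith
  by_cases hβδ : δ ≤ (dist x y + dist y (g y) - dist (g x) y) / 2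
  · -- case β ≥ δ : use near-minimality with a point on [y,x] beyond β, below ρ
    obtain ⟨γ, hγ⟩ := hgeo y x
    obtain ⟨τ, hτ⟩ := hgeo y (g x)
    have hρval : gromovProd x (g x) y = (dist x y + dist (g x) y - dist x (g x)) / 2 := rfl
    have hρlb : 2 * δ + M < (dist x y + dist (g x) y - dist x (g x)) / 2 := by linarith
    set t := min ((dist x y + dist (g x) y - dist x (g x)) / 2) (dist x y) with htdef
    have htM : M < t := lt_min (by linarith) (by linarith)
    have ht0 : 0 ≤ t := le_trans hM.le htM.le
    have htD : t ≤ dist x y := min_le_right _ _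
    have htρ : t ≤ gromovProd x (g x) y := by
      rw [hρval]; exact min_le_left _ _
    have hβt : (dist x y + dist y (g y) - dist (g x) y) / 2 ≤ t :=
      le_min (by linarith) (by linarith)
    have hth1 := hthin y x (g x) γ τ hγ hτ t ht0 htρ
    have hγ' : IsGeodesicFrom (fun s => g (γ (dist y x - s))) (g x) (g y) := hγ.rev_map hg
    have hτ' : IsGeodesicFrom (fun s => τ (dist y (g x) - s)) (g x) y := hτ.reverse
    have hs0 : 0 ≤ dist y x - t := by rw [hc1]; linarith
    have hsP : dist y x - t ≤ gromovProd (g y) y (g x) := by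
      have e : gromovProd (g y) y (g x)
          = (dist (g y) (g x) + dist y (g x) - dist (g y) y) / 2 := rfl
      rw [e, hc5, hc3, hc2, hc1]
      linarith
    have hth2 : dist (g (γ (dist y x - (dist y x - t))))
        (τ (dist y (g x) - (dist y x - t))) ≤ δ :=
      hthin (g x) (g y) y _ _ hγ' hτ' (dist y x - t) hs0 hsP
    rw [show dist y x - (dist y x - t) = t from by ring] at hth2
    -- A ≥ D
    have hPD : dist y x ≤ dist y (g x) := by rw [hc1, hc3]; linarith
    have hu := hτ.2.2 t
      (Set.mem_Icc.mpr ⟨ht0, le_trans (by rw [hc1]; exact htD) hPD⟩)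
      (dist y (g x) - (dist y x - t))
      (Set.mem_Icc.mpr ⟨by linarith, by linarith⟩)
    have huv : dist (τ t) (τ (dist y (g x) - (dist y x - t)))
        = dist y (g x) - dist y x := by
      rw [hu, abs_of_nonpos (show t - (dist y (g x) - (dist y x - t)) ≤ 0 from by linarith)]
      ring
    have hdisp : dist (γ t) (g (γ t)) ≤ dist y (g x) - dist y x + 2 * δ := by
      have h3 : dist (τ (dist y (g x) - (dist y x - t))) (g (γ t)) ≤ δ := by
        rw [dist_comm]; exact hth2
      have h4 : dist (γ t) (g (γ t)) ≤ dist (γ t) (τ t)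
          + dist (τ t) (τ (dist y (g x) - (dist y x - t)))
          + dist (τ (dist y (g x) - (dist y x - t))) (g (γ t)) := dist_triangle4 _ _ _ _
      linarith
    have hzY : γ t ∈ Y := by
      apply hmemg
      have e : dist y (g x) - dist y x + 2 * δ ≤ dist y (g y) := by
        rw [hc3, hc1]; linarith
      linarith
    have hinf := Metric.infDist_le_dist_of_mem (x := x) hzY
    have hxz : dist x (γ t) = dist x y - t := by
      have e := hγ.2.2 t (Set.mem_Icc.mpr ⟨ht0, by rw [hc1]; exact htD⟩)
        (dist y x) (Set.mem_Icc.mpr ⟨dist_nonneg, le_rfl⟩)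
      rw [hγ.2.1] at e
      rw [dist_comm x (γ t), e,
        abs_of_nonpos (show t - dist y x ≤ 0 from by rw [hc1]; linarith), hc1]
      ring
    rw [hxz] at hinf
    linarith
  · -- case β < δ : four-point inequality gives α > δ + 2M, contradiction
    push_neg at hβδ
    have h4 := hfour x (g x) (g y) y
    rcases max_cases (dist x (g x) + dist (g y) y) (dist x y + dist (g x) (g y)) with
      ⟨hm, _⟩ | ⟨hm, _⟩ <;> rw [hm] at h4 <;> linarith
end

section
/- Let (X,d) be a geodesic metric space and δ ≥ 0 such that (i) every geodesic triangle in X is δ-thin in the tripod sense: for any geodesic triangle with vertices a, b, c, if p lies on a side [a,b] and q lies on a side [a,c] with d(a,p) = d(a,q) ≤ (b|c)_a, then d(p,q) ≤ δ; and (ii) the four-point inequality d(a,c) + d(b,d) ≤ max{d(a,b) + d(c,d), d(a,d) + d(b,c)} + 2δ holds for all a, b, c, d ∈ X. Let g be an isometry of X with minimal displacement τ(g) = inf{d(z, g(z)) : z ∈ X}, let ε > 0 and N > 0 be such that the set Y = {y ∈ X : d(y, g(y)) ≤ N} is nonempty, let x ∈ X and M > 0, and let y ∈ Y satisfy d(x,y)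 ≤ d(x,Y) + M. Suppose moreover that d(y, g(y)) ≤ τ(g) + ε and d(y, g(y)) > 3δ + 2M. Then 2·d(x, g(x)) − d(x, g(g(x))) ≥ 2·d(x,y) − 4(3δ + 2M) − 2ε. -/
/-- The minimal displacement `τ(g) = inf {d(z, g z) : z ∈ X}` of a map `g`. -/
noncomputable def minDisplacement {X : Type*} [MetricSpace X] (g : X → X) : ℝ :=
  ⨅ z : X, dist z (g z)

/-- In a geodesic metric space with `δ`-thin triangles (tripod sense) satisfying
the four-point inequality, let `g` be an isometry, `Y = {y : d(y, g y) ≤ N}`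
nonempty, `y ∈ Y` with `d(x,y) ≤ d(x,Y) + M`, `d(y, g y) ≤ τ(g) + ε`, and
`d(y, g y) > 3δ + 2M`. Then
`2 d(x, g x) - d(x, g² x) ≥ 2 d(x,y) - 4(3δ + 2M) - 2ε`. -/
theorem two_dist_sub_dist_sq_ge {X : Type*} [MetricSpace X]
    (δ : ℝ) (hδ : 0 ≤ δ)
    (hgeo : ∀ a b : X, ∃ γ : ℝ → X, IsGeodesicFrom γ a b)
    (hthin : ∀ a b c : X, ∀ γ₁ γ₂ : ℝ → X, IsGeodesicFrom γ₁ a b → IsGeodesicFrom γ₂ a c →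
      ∀ s : ℝ, 0 ≤ s → s ≤ gromovProd b c a → dist (γ₁ s) (γ₂ s) ≤ δ)
    (hfour : ∀ a b c e : X,
      dist a c + dist b e ≤ max (dist a b + dist c e) (dist a e + dist b c) + 2 * δ)
    (g : X → X) (hg : Isometry g) (hbij : Function.Bijective g)
    (ε : ℝ) (hε : 0 < ε) (N : ℝ) (hN : 0 < N)
    (Y : Set X) (hY : Y = {y : X | dist y (g y) ≤ N}) (hYne : Y.Nonempty)
    (x : X) (M : ℝ) (hM : 0 < M)
    (y : X) (hy : y ∈ Y) (hxy : dist x y ≤ Metric.infDist x Y + M)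
    (hyτ : dist y (g y) ≤ minDisplacement g + ε)
    (hybig : dist y (g y) > 3 * δ + 2 * M) :
    2 * dist x (g x) - dist x (g (g x)) ≥
      2 * dist x y - 4 * (3 * δ + 2 * M) - 2 * ε := by
  subst hY
  set r := dist x y with hr
  set D := dist y (g y) with hD
  have hDN : D ≤ N := hy
  have hinf : r - M ≤ Metric.infDist x {y : X | dist y (g y) ≤ N} := by linarith
  have hD0 : 0 ≤ D := dist_nonneg
  -- Claim A : gromovProd x (g y) y ≤ δ + M
  obtain ⟨γ₁, hγ₁0, hγ₁1, hγ₁⟩ := hgeo y x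
  obtain ⟨γ₂, hγ₂0, hγ₂1, hγ₂⟩ := hgeo y (g y)
  set P := gromovProd x (g y) y with hP
  have hPdef : P = (dist x y + dist (g y) y - dist x (g y)) / 2 := rfl
  have hgyy : dist (g y) y = D := dist_comm (g y) y
  have htri1 : dist x (g y) ≤ dist x y + dist y (g y) := dist_triangle x y (g y)
  have htri2 : dist (g y) y ≤ dist (g y) x + dist x y := dist_triangle (g y) x y
  have htri3 : dist x y ≤ dist x (g y) + dist (g y) y := dist_triangle x (g y) y
  have hP0 : 0 ≤ P := by
    rw [hPdef]
    have : dist y (g y) = dist (g y) y := dist_comm y (g y)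
    linarith
  have hPr : P ≤ r := by
    rw [hPdef]
    have : dist (g y) x = dist x (g y) := dist_comm (g y) x
    linarith
  have hPD : P ≤ D := by rw [hPdef]; linarith [hgyy]
  have hq_y : dist (γ₂ P) y = P := by
    have := hγ₂ P ⟨hP0, hPD⟩ 0 ⟨le_refl 0, hD0⟩
    rw [hγ₂0] at this
    rw [this, sub_zero, abs_of_nonneg hP0]
  have hq_gy : dist (γ₂ P) (g y) = D - P := by
    have := hγ₂ P ⟨hP0, hPD⟩ (dist y (g y)) ⟨hD0, le_refl _⟩
    rw [hγ₂1] at this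
    rw [this, abs_of_nonpos (by linarith)]; ring
  have hqY : γ₂ P ∈ {y : X | dist y (g y) ≤ N} := by
    have h1 : dist (γ₂ P) (g (γ₂ P)) ≤ dist (γ₂ P) (g y) + dist (g y) (g (γ₂ P)) :=
      dist_triangle _ _ _
    have h2 : dist (g y) (g (γ₂ P)) = dist y (γ₂ P) := hg.dist_eq y (γ₂ P)
    have h3 : dist y (γ₂ P) = P := by rw [dist_comm]; exact hq_y
    simp only [Set.mem_setOf_eq]
    linarith
  have hxq : r - M ≤ dist x (γ₂ P) :=
    le_trans hinf (Metric.infDist_le_dist_of_mem hqY)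
  have hthinA : dist (γ₁ P) (γ₂ P) ≤ δ :=
    hthin y x (g y) γ₁ γ₂ ⟨hγ₁0, hγ₁1, hγ₁⟩ ⟨hγ₂0, hγ₂1, hγ₂⟩ P hP0 (le_refl P)
  have hryx : dist y x = r := dist_comm y x
  have hp_x : dist (γ₁ P) x = r - P := by
    have := hγ₁ P ⟨hP0, by rw [hryx]; exact hPr⟩ (dist y x) ⟨dist_nonneg, le_refl _⟩
    rw [hγ₁1, hryx] at this
    rw [this, abs_of_nonpos (by linarith)]; ring
  have hPbound : P ≤ δ + M := by
    have h1 : dist x (γ₂ P) ≤ dist x (γ₁ P) + dist (γ₁ P) (γ₂ P) := dist_triangle _ _ _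
    have h2 : dist x (γ₁ P) = r - P := by rw [dist_comm]; exact hp_x
    linarith
  -- Claim B : gromovProd y (g x) (g y) ≤ δ + M
  obtain ⟨γ₃, hγ₃0, hγ₃1, hγ₃⟩ := hgeo (g y) y
  obtain ⟨γ₄, hγ₄0, hγ₄1, hγ₄⟩ := hgeo (g y) (g x)
  set P' := gromovProd y (g x) (g y) with hP'
  have hP'def : P' = (dist y (g y) + dist (g x) (g y) - dist y (g x)) / 2 := rfl
  have hgxgy : dist (g x) (g y) = r := hg.dist_eq x y
  have hgygx : dist (g y) (g x) = r := by rw [hg.dist_eq]; exact dist_comm y x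
  have htri4 : dist y (g x) ≤ dist y (g y) + dist (g y) (g x) := dist_triangle _ _ _
  have htri5 : dist y (g y) ≤ dist y (g x) + dist (g x) (g y) := dist_triangle _ _ _
  have htri6 : dist (g y) (g x) ≤ dist (g y) y + dist y (g x) := dist_triangle _ _ _
  have hP'0 : 0 ≤ P' := by rw [hP'def]; linarith [hgxgy, hgygx]
  have hP'D : P' ≤ D := by rw [hP'def]; linarith [hgxgy, hgygx, hgyy]
  have hP'r : P' ≤ r := by rw [hP'def]; linarith [hgxgy, hgygx, hgyy]
  have hgyyD : dist (g y) y = D := hgyy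
  have hq'_gy : dist (γ₃ P') (g y) = P' := by
    have := hγ₃ P' ⟨hP'0, by rw [hgyyD]; exact hP'D⟩ 0 ⟨le_refl 0, by rw [hgyyD]; exact hD0⟩
    rw [hγ₃0] at this
    rw [this, sub_zero, abs_of_nonneg hP'0]
  have hq'_y : dist (γ₃ P') y = D - P' := by
    have := hγ₃ P' ⟨hP'0, by rw [hgyyD]; exact hP'D⟩ (dist (g y) y)
      ⟨dist_nonneg, le_refl _⟩
    rw [hγ₃1, hgyyD] at this
    rw [this, abs_of_nonpos (by linarith)]; ring
  obtain ⟨z, hz⟩ := hbij.2 (γ₃ P')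
  have hzY : z ∈ {y : X | dist y (g y) ≤ N} := by
    have h1 : dist z (γ₃ P') ≤ dist z y + dist y (γ₃ P') := dist_triangle _ _ _
    have h2 : dist z y = dist (g z) (g y) := (hg.dist_eq z y).symm
    have h3 : dist y (γ₃ P') = D - P' := by rw [dist_comm]; exact hq'_y
    simp only [Set.mem_setOf_eq]
    rw [hz] at h2 ⊢
    linarith [hq'_gy]
  have hxz : r - M ≤ dist x z := le_trans hinf (Metric.infDist_le_dist_of_mem hzY)
  have hgxq' : r - M ≤ dist (g x) (γ₃ P') := by
    have : dist (g x) (γ₃ P') = dist x z := by rw [← hz, hg.dist_eq]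
    linarith
  have hthinB : dist (γ₃ P') (γ₄ P') ≤ δ :=
    hthin (g y) y (g x) γ₃ γ₄ ⟨hγ₃0, hγ₃1, hγ₃⟩ ⟨hγ₄0, hγ₄1, hγ₄⟩ P' hP'0 (le_refl P')
  have hp'_gx : dist (γ₄ P') (g x) = r - P' := by
    have := hγ₄ P' ⟨hP'0, by rw [hgygx]; exact hP'r⟩ (dist (g y) (g x))
      ⟨dist_nonneg, le_refl _⟩
    rw [hγ₄1, hgygx] at this
    rw [this, abs_of_nonpos (by linarith)]; ring
  have hP'bound : P' ≤ δ + M := by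
    have h1 : dist (g x) (γ₃ P') ≤ dist (g x) (γ₄ P') + dist (γ₄ P') (γ₃ P') :=
      dist_triangle _ _ _
    have h2 : dist (g x) (γ₄ P') = r - P' := by rw [dist_comm]; exact hp'_gx
    have h3 : dist (γ₄ P') (γ₃ P') = dist (γ₃ P') (γ₄ P') := dist_comm _ _
    linarith
  -- Four-point inequality
  have hfour' := hfour x y (g y) (g x)
  have hxgy : dist x (g y) = r + D - 2 * P := by rw [hPdef]; rw [hgyy]; ring
  have hygx : dist y (g x) = D + r - 2 * P' := by rw [hP'def]; rw [hgxgy]; ring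
  have hkey : dist x (g x) ≥ 2 * r + D - 6 * δ - 4 * M := by
    rcases max_cases (dist x y + dist (g y) (g x)) (dist x (g x) + dist y (g y))
      with ⟨heq, hle⟩ | ⟨heq, hle⟩
    · rw [heq] at hfour'
      rw [hxgy, hygx, hgygx] at hfour'
      linarith
    · rw [heq] at hfour'
      rw [hxgy, hygx] at hfour'
      linarith
  -- Final bound
  have hfinal : dist x (g (g x)) ≤ 2 * r + 2 * D := by
    have h1 : dist x (g (g x)) ≤ dist x y + dist y (g y) + dist (g y) (g (g x)) :=
      dist_triangle4 x y (g y) (g (g x))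
    have h2 : dist (g y) (g (g x)) = dist y (g x) := hg.dist_eq y (g x)
    rw [h2, hygx] at h1
    linarith [hP'0]
  linarith
end

section
/- Let (X,d) be a geodesic metric space and δ ≥ 0 such that every geodesic triangle in X is δ-slim: each side is contained in the closed δ-neighborhood of the union of the other two sides. Let g be an isometry of X, let x, y ∈ X, and let γ : [0, d(x,y)] → X be a geodesic from x to y parametrized by arclength. Then for every t ∈ [0, d(x,y)] one has d(g(γ(t)), γ(t)) ≤ 4δ + 3·d(x, g(x)) + 2·d(y, g(y)). -/
/-- The geodesic segment (as a subset of `X`) traced out by a geodesic `γ` from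
`a` to `b`. -/
def geodSeg {X : Type*} [MetricSpace X] (γ : ℝ → X) (a b : X) : Set X :=
  γ '' Set.Icc (0 : ℝ) (dist a b)

/-- `S` is contained in the closed `r`-neighborhood of `T`. -/
def InClosedNbhd {X : Type*} [MetricSpace X] (S T : Set X) (r : ℝ) : Prop :=
  ∀ p ∈ S, Metric.infDist p T ≤ r

lemma geod_dist_left {X : Type*} [MetricSpace X] {γ : ℝ → X} {a b : X}
    (h : IsGeodesicFrom γ a b) {u : ℝ} (hu : u ∈ Set.Icc (0 : ℝ) (dist a b)) :
    dist (γ u) a = u := by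
  have h0 : (0 : ℝ) ∈ Set.Icc (0 : ℝ) (dist a b) := ⟨le_refl 0, dist_nonneg⟩
  have := h.2.2 u hu 0 h0
  rw [h.1] at this
  rw [this, sub_zero, abs_of_nonneg hu.1]

lemma geod_dist_right {X : Type*} [MetricSpace X] {γ : ℝ → X} {a b : X}
    (h : IsGeodesicFrom γ a b) {u : ℝ} (hu : u ∈ Set.Icc (0 : ℝ) (dist a b)) :
    dist (γ u) b = dist a b - u := by
  have hD : dist a b ∈ Set.Icc (0 : ℝ) (dist a b) := ⟨dist_nonneg, le_refl _⟩
  have := h.2.2 u hu (dist a b) hD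
  rw [h.2.1] at this
  rw [this, abs_of_nonpos (by linarith [hu.2]), neg_sub]

lemma geod_sum_dist {X : Type*} [MetricSpace X] {γ : ℝ → X} {a b : X}
    (h : IsGeodesicFrom γ a b) {p : X} (hp : p ∈ geodSeg γ a b) :
    dist p a + dist p b = dist a b := by
  obtain ⟨u, hu, rfl⟩ := hp
  rw [geod_dist_left h hu, geod_dist_right h hu]
  ring

/-- In a geodesic metric space with `δ`-slim geodesic triangles, if `g` is an
isometry and `γ : [0, d(x,y)] → X` is a geodesic from `x` to `y`, then for all
`t ∈ Set.Icc 0 (dist x y)` we have the claimed bound. -/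
theorem dist_image_geodesic_le {X : Type*} [MetricSpace X] (δ : ℝ) (hδ : 0 ≤ δ)
    (hgeo : ∀ a b : X, ∃ γ : ℝ → X, IsGeodesicFrom γ a b)
    (hslim : ∀ a b c : X, ∀ γ₁ γ₂ γ₃ : ℝ → X,
      IsGeodesicFrom γ₁ a b → IsGeodesicFrom γ₂ b c → IsGeodesicFrom γ₃ c a →
      InClosedNbhd (geodSeg γ₁ a b) (geodSeg γ₂ b c ∪ geodSeg γ₃ c a) δ ∧
      InClosedNbhd (geodSeg γ₂ b c) (geodSeg γ₃ c a ∪ geodSeg γ₁ a b) δ ∧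
      InClosedNbhd (geodSeg γ₃ c a) (geodSeg γ₁ a b ∪ geodSeg γ₂ b c) δ)
    (g : X → X) (hg : Isometry g) (hbij : Function.Bijective g)
    (x y : X) (γ : ℝ → X) (hγ : IsGeodesicFrom γ x y) :
    ∀ t ∈ Set.Icc (0 : ℝ) (dist x y),
      dist (g (γ t)) (γ t) ≤ 4 * δ + 3 * dist x (g x) + 2 * dist y (g y) := by
  intro t ht
  have hdxy : dist (g x) (g y) = dist x y := hg.dist_eq x y
  have hgγ : IsGeodesicFrom (g ∘ γ) (g x) (g y) := by
    refine ⟨by simp [Function.comp, hγ.1], ?_, ?_⟩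
    · simp only [Function.comp, hdxy, hγ.2.1]
    · intro s hs u hu
      rw [hdxy] at hs hu
      simp only [Function.comp, hg.dist_eq]
      exact hγ.2.2 s hs u hu
  obtain ⟨σ, hσ⟩ := hgeo y (g x)
  obtain ⟨α, hα⟩ := hgeo (g x) x
  obtain ⟨τ, hτ⟩ := hgeo (g y) y
  have hs1 := (hslim x y (g x) γ σ α hγ hσ hα).1
  have hs2 := (hslim y (g x) (g y) σ (g ∘ γ) τ hσ hgγ hτ).1
  set p := γ t with hpdef
  have hpmem : p ∈ geodSeg γ x y := ⟨t, ht, rfl⟩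
  have hpx : dist p x = t := geod_dist_left hγ ht
  have hdx : (0:ℝ) ≤ dist x (g x) := dist_nonneg
  have hdy : (0:ℝ) ≤ dist y (g y) := dist_nonneg
  refine le_of_forall_pos_le_add fun ε hε => ?_
  have hε4 : (0:ℝ) < ε / 4 := by linarith
  -- first application of slimness
  have hne1 : (geodSeg σ y (g x) ∪ geodSeg α (g x) x).Nonempty :=
    ⟨σ 0, Or.inl ⟨0, ⟨le_refl 0, dist_nonneg⟩, rfl⟩⟩
  have h1 : Metric.infDist p (geodSeg σ y (g x) ∪ geodSeg α (g x) x) < δ + ε / 4 :=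
    lt_of_le_of_lt (hs1 p hpmem) (by linarith)
  obtain ⟨q, hq, hpq⟩ := (Metric.infDist_lt_iff hne1).mp h1
  rcases hq with hq | hq
  · -- q is on the geodesic σ from y to g x : use second slimness
    have hne2 : (geodSeg (g ∘ γ) (g x) (g y) ∪ geodSeg τ (g y) y).Nonempty :=
      ⟨τ 0, Or.inr ⟨0, ⟨le_refl 0, dist_nonneg⟩, rfl⟩⟩
    have h2 : Metric.infDist q (geodSeg (g ∘ γ) (g x) (g y) ∪ geodSeg τ (g y) y) < δ + ε / 4 :=
      lt_of_le_of_lt (hs2 q hq) (by linarith)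
    obtain ⟨r, hr, hqr⟩ := (Metric.infDist_lt_iff hne2).mp h2
    have hpr : dist p r ≤ dist p q + dist q r := dist_triangle p q r
    rcases hr with hr | hr
    · -- r = g (γ s) is on the image geodesic
      obtain ⟨s, hs, rfl⟩ := hr
      rw [hdxy] at hs
      have hrgx : dist ((g ∘ γ) s) (g x) = s := by
        have := geod_dist_left hgγ (u := s) (by rw [hdxy]; exact hs)
        exact this
      have hgpr : dist (g p) ((g ∘ γ) s) = |t - s| := by
        simp only [Function.comp, hpdef, hg.dist_eq]
        exact hγ.2.2 t ht s hs
      -- bound |t - s|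
      have t1 : dist ((g ∘ γ) s) (g x) ≤ dist ((g ∘ γ) s) p + dist p (g x) :=
        dist_triangle _ _ _
      have t2 : dist p (g x) ≤ dist p x + dist x (g x) := dist_triangle _ _ _
      have t3 : dist p x ≤ dist p ((g ∘ γ) s) + dist ((g ∘ γ) s) (g x) + dist (g x) x :=
        dist_triangle4 _ _ _ _
      have hc1 : dist ((g ∘ γ) s) p = dist p ((g ∘ γ) s) := dist_comm _ _
      have hc2 : dist (g x) x = dist x (g x) := dist_comm _ _
      have hts : |t - s| ≤ dist p ((g ∘ γ) s) + dist x (g x) := by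
        rw [abs_sub_le_iff]
        constructor
        · rw [hrgx] at t3; linarith
        · rw [hrgx] at t1; linarith
      have tri : dist (g p) p ≤ dist (g p) ((g ∘ γ) s) + dist ((g ∘ γ) s) p :=
        dist_triangle _ _ _
      rw [hgpr] at tri
      have : dist p ((g ∘ γ) s) ≤ dist p q + dist q ((g ∘ γ) s) := dist_triangle _ _ _
      rw [show dist ((g ∘ γ) s) p = dist p ((g ∘ γ) s) from dist_comm _ _] at tri
      calc dist (g p) p ≤ |t - s| + dist p ((g ∘ γ) s) := tri
        _ ≤ 2 * dist p ((g ∘ γ) s) + dist x (g x) := by linarith [hts]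
        _ ≤ 4 * δ + 3 * dist x (g x) + 2 * dist y (g y) + ε := by linarith
    · -- r is on the geodesic τ from g y to y
      have hsum : dist r (g y) + dist r y = dist (g y) y := geod_sum_dist hτ hr
      have t1 : dist (g p) p ≤ dist (g p) (g y) + dist (g y) r + dist r p :=
        dist_triangle4 _ _ _ _
      have t2 : dist (g p) (g y) = dist p y := hg.dist_eq p y
      have t3 : dist p y ≤ dist p r + dist r y := dist_triangle _ _ _
      have hc1 : dist (g y) r = dist r (g y) := dist_comm _ _
      have hc2 : dist r p = dist p r := dist_comm _ _
      have hc3 : dist (g y) y = dist y (g y) := dist_comm _ _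
      calc dist (g p) p ≤ 2 * dist p r + dist y (g y) := by linarith
        _ ≤ 4 * δ + 3 * dist x (g x) + 2 * dist y (g y) + ε := by linarith
  · -- q is on the geodesic α from g x to x
    have hsum : dist q (g x) + dist q x = dist (g x) x := geod_sum_dist hα hq
    have t1 : dist (g p) p ≤ dist (g p) (g x) + dist (g x) q + dist q p :=
      dist_triangle4 _ _ _ _
    have t2 : dist (g p) (g x) = dist p x := hg.dist_eq p x
    have t3 : dist p x ≤ dist p q + dist q x := dist_triangle _ _ _
    have hc1 : dist (g x) q = dist q (g x) := dist_comm _ _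
    have hc2 : dist q p = dist p q := dist_comm _ _
    have hc3 : dist (g x) x = dist x (g x) := dist_comm _ _
    calc dist (g p) p ≤ 2 * dist p q + dist x (g x) := by linarith
      _ ≤ 4 * δ + 3 * dist x (g x) + 2 * dist y (g y) + ε := by linarith
end

section
/- Let Q be a group and let N be a finite normal subgroup of Q such that the quotient group Q/N is residually finite. Then every virtually torsion-free subgroup of Q is residually finite. -/
/-- `G` is residually finite: every nontrivial element is detected by a
homomorphism to a finite group. -/
def ResiduallyFinite (G : Type*) [Group G] : Prop :=
  ∀ g : G, g ≠ 1 → ∃ (F : Type) (_ : Group F) (_ : Finite F) (φ : G →* F), φ g ≠ 1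

/-- `G` is virtually torsion-free: it has a torsion-free subgroup of finite
index. -/
def VirtuallyTorsionFree (G : Type*) [Group G] : Prop :=
  ∃ K : Subgroup G, K.FiniteIndex ∧ (∀ g : K, g ≠ 1 → ¬IsOfFinOrder g)

/-!
An element `h ≠ 1` of `H` either survives in `Q ⧸ N`, which is residually finite, or lies in the
finite group `N`. In the latter case `h` has finite order, so it lies outside a torsion-free
subgroup `K` of finite index in `H`, and the finite quotient of `H` by the normal core of `K`
detects it.
-/

lemma MonoidHom.exists_hom_finite_type_ne_one {G F' : Type*} [Group G] [Group F'] [Finite F']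
    (φ : G →* F') {g : G} (hg : φ g ≠ 1) :
    ∃ (F : Type) (_ : Group F) (_ : Finite F) (ψ : G →* F), ψ g ≠ 1 :=
  ⟨Shrink.{0} F', inferInstance, inferInstance,
    (Shrink.mulEquiv.{0} (α := F')).symm.toMonoidHom.comp φ, by simpa using hg⟩

lemma Subgroup.exists_hom_finite_type_ne_one_of_notMem {G : Type*} [Group G] (K : Subgroup G)
    [K.FiniteIndex] {g : G} (hg : g ∉ K) :
    ∃ (F : Type) (_ : Group F) (_ : Finite F) (φ : G →* F), φ g ≠ 1 :=
  (QuotientGroup.mk' K.normalCore).exists_hom_finite_type_ne_one <| by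
    rw [ne_eq, QuotientGroup.mk'_apply, QuotientGroup.eq_one_iff]
    exact fun h => hg (K.normalCore_le h)

lemma Subgroup.notMem_of_isOfFinOrder {G : Type*} [Group G] {K : Subgroup G}
    (hK : ∀ g : K, g ≠ 1 → ¬IsOfFinOrder g) {g : G} (hg : IsOfFinOrder g) (hne : g ≠ 1) :
    g ∉ K := fun hmem =>
  hK ⟨g, hmem⟩ (by simpa using hne) (K.subtype_injective.isOfFinOrder_iff.mp hg)

lemma Subgroup.isOfFinOrder_of_mem {G : Type*} [Group G] (N : Subgroup G) [Finite N] {g : G}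
    (hg : g ∈ N) : IsOfFinOrder g :=
  N.subtype_injective.isOfFinOrder_iff.mpr (isOfFinOrder_of_finite (⟨g, hg⟩ : N))

lemma ResiduallyFinite.exists_hom_finite_type_ne_one {G G' : Type*} [Group G] [Group G']
    (hG' : ResiduallyFinite G') (f : G →* G') {g : G} (hg : f g ≠ 1) :
    ∃ (F : Type) (_ : Group F) (_ : Finite F) (φ : G →* F), φ g ≠ 1 := by
  obtain ⟨F, _, _, φ, hφ⟩ := hG' (f g) hg
  exact ⟨F, _, ‹_›, φ.comp f, hφ⟩

/-- If `N` is a finite normal subgroup of `Q` such that `Q/N` is residually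
finite, then every virtually torsion-free subgroup of `Q` is residually
finite. -/
theorem virtuallyTorsionFree_subgroup_residuallyFinite {Q : Type*} [Group Q]
    (N : Subgroup Q) [N.Normal] [Finite N]
    (hQN : ResiduallyFinite (Q ⧸ N)) (H : Subgroup Q)
    (hH : VirtuallyTorsionFree H) :
    ResiduallyFinite H := by
  obtain ⟨K, _, hKtf⟩ := hH
  intro h hne
  by_cases hmem : (h : Q) ∈ N
  · have hfin : IsOfFinOrder h :=
      H.subtype_injective.isOfFinOrder_iff.mp (N.isOfFinOrder_of_mem hmem)
    exact K.exists_hom_finite_type_ne_one_of_notMem (Subgroup.notMem_of_isOfFinOrder hKtf hfin hne)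
  · refine hQN.exists_hom_finite_type_ne_one ((QuotientGroup.mk' N).comp H.subtype) ?_
    simpa [QuotientGroup.eq_one_iff] using hmem
end

section
/- Let G be a group such that the inner automorphism group Inn(G) has finite index in the group Conj(G) of conjugating automorphisms of G, and such that the quotient group Aut(G)/Conj(G) is residually finite. Then every virtually torsion-free subgroup of the outer automorphism group Out(G) = Aut(G)/Inn(G) is residually finite. -/
/-! The natural map `Out(G) → Aut(G)/Conj(G)` has kernel `Conj(G)/Inn(G)`, which is finite.
Let `K` be a torsion-free subgroup of finite index in `H ≤ Out(G)`. A finite subgroup meets `K`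
trivially, so every nontrivial element of `K` survives in the residually finite group
`Aut(G)/Conj(G)`, while an element outside `K` is detected by the finite quotient of `H` by the
normal core of `K`. -/

/-- The subgroup of `Aut(G) = MulAut G` consisting of the conjugating
automorphisms, i.e. those `f` with `f g` conjugate to `g` for every `g ∈ G`. -/
def ConjAut (G : Type*) [Group G] : Subgroup (MulAut G) where
  carrier := {f : MulAut G | ∀ g : G, IsConj g (f g)}
  one_mem' := fun g => by simpa using IsConj.refl g
  mul_mem' := by
    intro a b ha hb g
    simpa using (hb g).trans (ha (b g))
  inv_mem' := by
    intro a ha g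
    have h := (ha (a⁻¹ g)).symm
    simpa using h

-- `ResiduallyFinite` asks for finite groups in `Type`; `Shrink` moves `F` down to it.
theorem exists_hom_to_finite_type_of_map_ne_one {H F : Type*} [Group H] [Group F] [Finite F]
    (φ : H →* F) {h : H} (hφ : φ h ≠ 1) :
    ∃ (F' : Type) (_ : Group F') (_ : Finite F') (ψ : H →* F'), ψ h ≠ 1 :=
  ⟨Shrink.{0} F, inferInstance, inferInstance, Shrink.mulEquiv.symm.toMonoidHom.comp φ,
    by simpa using hφ⟩

theorem exists_hom_to_finite_type_of_notMem {H : Type*} [Group H] {K : Subgroup H}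
    [K.FiniteIndex] {h : H} (hh : h ∉ K) :
    ∃ (F : Type) (_ : Group F) (_ : Finite F) (φ : H →* F), φ h ≠ 1 :=
  exists_hom_to_finite_type_of_map_ne_one (QuotientGroup.mk' K.normalCore) <| by
    rw [ne_eq, QuotientGroup.mk'_apply, QuotientGroup.eq_one_iff]
    exact fun hc => hh (K.normalCore_le hc)

theorem Subgroup.inf_eq_bot_of_finite_of_torsionFree {H : Type*} [Group H] (N K : Subgroup H)
    [Finite N] (hK : ∀ g : K, g ≠ 1 → ¬IsOfFinOrder g) : N ⊓ K = ⊥ := by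
  refine (Subgroup.eq_bot_iff_forall _).2 fun g ⟨hgN, hgK⟩ => ?_
  by_contra hg
  refine hK ⟨g, hgK⟩ (by simpa using hg) ?_
  have : IsOfFinOrder (⟨g, hgN⟩ : N) := isOfFinOrder_of_finite _
  exact Submonoid.isOfFinOrder_coe.1 (Submonoid.isOfFinOrder_coe.2 this : IsOfFinOrder g)

theorem ResiduallyFinite.of_ker_inf_eq_bot {H Q : Type*} [Group H] [Group Q]
    (hQ : ResiduallyFinite Q) (π : H →* Q) (K : Subgroup H) [K.FiniteIndex]
    (hK : π.ker ⊓ K = ⊥) : ResiduallyFinite H := by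
  intro h hh
  by_cases hhK : h ∈ K
  · have hπ : π h ≠ 1 := fun hπ =>
      hh <| (Subgroup.eq_bot_iff_forall _).1 hK h ⟨hπ, hhK⟩
    obtain ⟨F, _, _, φ, hφ⟩ := hQ _ hπ
    exact ⟨F, ‹_›, ‹_›, φ.comp π, hφ⟩
  · exact exists_hom_to_finite_type_of_notMem hhK

theorem range_mulAutConj_le_conjAut (G : Type*) [Group G] :
    (MulAut.conj : G →* MulAut G).range ≤ ConjAut G := by
  rintro f ⟨g, rfl⟩ x
  exact isConj_iff.2 ⟨g, rfl⟩

theorem finite_map_mk'_of_finiteIndex_subgroupOf {A : Type*} [Group A] (I C : Subgroup A)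
    [I.Normal] [(I.subgroupOf C).FiniteIndex] : Finite (C.map (QuotientGroup.mk' I)) := by
  let ψ := (QuotientGroup.mk' I).comp C.subtype
  have hker : ψ.ker = I.subgroupOf C := by
    ext x; simp [ψ, Subgroup.mem_subgroupOf]
  have : Finite (C ⧸ ψ.ker) := hker ▸ Subgroup.finite_quotient_of_finiteIndex
  rw [← Subgroup.range_subtype C, ← MonoidHom.range_comp]
  exact Finite.of_equiv _ (QuotientGroup.quotientKerEquivRange ψ).toEquiv

theorem ResiduallyFinite.of_finite_ker_of_virtuallyTorsionFree {H Q : Type*} [Group H]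
    [Group Q] (hQ : ResiduallyFinite Q) (π : H →* Q) [Finite π.ker]
    (hH : VirtuallyTorsionFree H) : ResiduallyFinite H := by
  obtain ⟨K, hK, hKtf⟩ := hH
  exact hQ.of_ker_inf_eq_bot π K (π.ker.inf_eq_bot_of_finite_of_torsionFree K hKtf)

theorem MonoidHom.finite_ker_comp_subtype {G Q : Type*} [Group G] [Group Q] (f : G →* Q)
    [Finite f.ker] (H : Subgroup G) : Finite (f.comp H.subtype).ker :=
  ((Set.toFinite (f.ker : Set G)).preimage Subtype.val_injective.injOn).to_subtype

/-- Let `G` be a group such that `Inn(G)` (the range of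
`MulAut.conj : G →* MulAut G`) has finite index in the group `Conj(G)` of
conjugating automorphisms, and such that `Aut(G)/Conj(G)` is residually finite.
Then every virtually torsion-free subgroup of `Out(G) = Aut(G)/Inn(G)` is
residually finite. -/
theorem virtuallyTorsionFree_subgroup_of_out_residuallyFinite
    (G : Type*) [Group G]
    [(MulAut.conj : G →* MulAut G).range.Normal] [(ConjAut G).Normal]
    (hfi : ((MulAut.conj : G →* MulAut G).range.subgroupOf (ConjAut G)).FiniteIndex)
    (hres : ResiduallyFinite (MulAut G ⧸ ConjAut G)) :
    ∀ H : Subgroup (MulAut G ⧸ (MulAut.conj : G →* MulAut G).range),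
      VirtuallyTorsionFree H → ResiduallyFinite H := by
  intro H hH
  let toAutModConj := QuotientGroup.map (MulAut.conj : G →* MulAut G).range (ConjAut G)
    (MonoidHom.id _) (range_mulAutConj_le_conjAut G)
  have : Finite toAutModConj.ker := by
    have hker : toAutModConj.ker = (ConjAut G).map (QuotientGroup.mk' _) :=
      QuotientGroup.ker_map _ _ _ _
    rw [hker]
    exact finite_map_mk'_of_finiteIndex_subgroupOf _ _
  have := toAutModConj.finite_ker_comp_subtype H
  exact hres.of_finite_ker_of_virtuallyTorsionFree (toAutModConj.comp H.subtype) hH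
end
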